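/- arXiv:2410.05207 — 3 statements merged into one kernel-verified Lean document; each statement's English description precedes it below -/
import Mathlib

section
/- For all positive integers n and k with n >= k, sum_{i=k}^{n} S(n, i) * s(i, k) / i = (1/n) * binom(n, k) * B_{n-k} + delta_{n-1, k}, where delta is the Kronecker delta. -/
/-!
Put `P = ∑ᵢ S(n,i)/i · (X)ᵢ`, where `(X)ᵢ = X(X-1)⋯(X-i+1) = ∑ₖ s(i,k) Xᵏ`, so that the sum on the
left is the `k`-th coefficient of `P`. Since `Δ(X)ᵢ = i (X)ᵢ₋₁` and `∑ᵢ S(n,i) (X)ᵢ₋₁ = (X+1)ⁿ⁻¹`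
(divide `Xⁿ = ∑ᵢ S(n,i) (X)ᵢ` by `X` and shift), `P` has forward difference `(X+1)ⁿ⁻¹` and vanishes
at `0`. So does `(Bₙ(X+1) - Bₙ(1))/n`, hence the two polynomials agree, and then
`Bₙ(X+1) = Bₙ(X) + n Xⁿ⁻¹` gives `C(n,k) B_{n-k}/n` from `Bₙ` and the Kronecker delta from `Xⁿ⁻¹`.
-/

open Finset

/-- Stirling numbers of the second kind. -/
def stirling2 : ℕ → ℕ → ℕ
  | 0, 0 => 1
  | 0, _ + 1 => 0
  | _ + 1, 0 => 0
  | n + 1, k + 1 => stirling2 n k + (k + 1) * stirling2 n (k + 1)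

/-- Signed Stirling numbers of the first kind. -/
def stirling1 : ℕ → ℕ → ℤ
  | 0, 0 => 1
  | 0, _ + 1 => 0
  | n + 1, 0 => -(n : ℤ) * stirling1 n 0
  | n + 1, k + 1 => stirling1 n k - (n : ℤ) * stirling1 n (k + 1)

/-- Bernoulli numbers of the second kind: `∫₀¹ x(x-1)⋯(x-n+1) dx`. -/
noncomputable def bernoulliStar (n : ℕ) : ℝ :=
  ∫ x in (0:ℝ)..1, (descPochhammer ℝ n).eval x

section

open Polynomial hiding bernoulli

theorem stirling2_eq_zero_of_lt : ∀ {n k : ℕ}, n < k → stirling2 n k = 0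
  | 0, _ + 1, _ => rfl
  | _ + 1, _ + 1, h => by
    rw [stirling2, stirling2_eq_zero_of_lt (by omega), stirling2_eq_zero_of_lt (by omega), mul_zero,
      add_zero]

theorem stirling1_eq_zero_of_lt : ∀ {n k : ℕ}, n < k → stirling1 n k = 0
  | 0, _ + 1, _ => rfl
  | _ + 1, _ + 1, h => by
    rw [stirling1, stirling1_eq_zero_of_lt (by omega), stirling1_eq_zero_of_lt (by omega)]
    ring

section

variable {R : Type*} [CommRing R]

theorem coeff_descPochhammer (n k : ℕ) : (descPochhammer R n).coeff k = stirling1 n k := by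
  induction n generalizing k with
  | zero => cases k <;> simp [stirling1, coeff_one]
  | succ n ih =>
    rw [descPochhammer_succ_right, mul_sub, coeff_sub, ← C_eq_natCast, coeff_mul_C]
    cases k with
    | zero => simp [stirling1, ih, mul_comm]
    | succ k => simp [stirling1, coeff_mul_X, ih, mul_comm]

theorem X_mul_descPochhammer (n : ℕ) :
    X * descPochhammer R n = descPochhammer R (n + 1) + n • descPochhammer R n := by
  rw [descPochhammer_succ_right, nsmul_eq_mul]
  ring

theorem X_pow_eq_sum_stirling2_smul_descPochhammer (n : ℕ) :
    (X : R[X]) ^ n = ∑ i ∈ range (n + 1), stirling2 n i • descPochhammer R i := by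
  induction n with
  | zero => simp [stirling2]
  | succ n ih =>
    have shift : ∑ i ∈ range (n + 1), (stirling2 n i * i) • descPochhammer R i =
        ∑ i ∈ range (n + 1), ((i + 1) * stirling2 n (i + 1)) • descPochhammer R (i + 1) := by
      rw [sum_range_succ', sum_range_succ, stirling2_eq_zero_of_lt n.lt_succ_self]
      simp [mul_comm]
    rw [sum_range_succ', pow_succ', ih, mul_sum]
    simp only [mul_smul_comm, X_mul_descPochhammer, smul_add, sum_add_distrib, smul_smul, shift]
    simp [stirling2, add_smul, sum_add_distrib]

theorem X_add_one_pow_eq_sum_stirling2_smul_descPochhammer (m : ℕ) :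
    (X + 1 : R[X]) ^ m = ∑ j ∈ range (m + 1), stirling2 (m + 1) (j + 1) • descPochhammer R j := by
  have key : X * ((X + 1 : R[X]) ^ m).comp (X - 1) =
      X * (∑ j ∈ range (m + 1), stirling2 (m + 1) (j + 1) • descPochhammer R j).comp (X - 1) := by
    rw [pow_comp, add_comp, X_comp, one_comp, sub_add_cancel, ← pow_succ',
      X_pow_eq_sum_stirling2_smul_descPochhammer, sum_range_succ', Polynomial.sum_comp, mul_sum]
    simp only [descPochhammer_succ_left, show stirling2 (m + 1) 0 = 0 from rfl, zero_smul,
      add_zero, smul_comp, mul_smul_comm]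
  have h := congr_arg (·.comp (X + 1)) (isRegular_X.left key)
  simp only [comp_assoc, sub_comp, X_comp, one_comp, add_sub_cancel_right, comp_X] at h
  exact h

theorem descPochhammer_succ_comp_X_add_one_sub (n : ℕ) :
    (descPochhammer R (n + 1)).comp (X + 1) - descPochhammer R (n + 1) =
      (n + 1) • descPochhammer R n := by
  have h := congr_arg (·.comp (X + 1)) (descPochhammer_succ_comp_X_sub_one (R := R) n)
  simp only [comp_assoc, sub_comp, X_comp, one_comp, add_sub_cancel_right, comp_X, smul_eq_mul,
    mul_comp, add_comp, natCast_comp] at h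
  rw [nsmul_eq_mul]
  push_cast
  linear_combination -h

end

theorem Polynomial.eq_of_comp_X_add_one_sub_eq {R : Type*} [CommRing R] [IsDomain R] [CharZero R]
    {f g : R[X]} (hΔ : f.comp (X + 1) - f = g.comp (X + 1) - g) (h0 : f.eval 0 = g.eval 0) :
    f = g := by
  have eval_natCast : ∀ m : ℕ, f.eval (m : R) = g.eval (m : R) := by
    intro m
    induction m with
    | zero => simpa using h0
    | succ m ih =>
      have h := congr_arg (eval (m : R)) hΔ
      simp only [eval_sub, eval_comp, eval_add, eval_X, eval_one] at h
      push_cast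
      linear_combination h + ih
  refine eq_of_infinite_eval_eq f g ((Set.infinite_range_of_injective Nat.cast_injective).mono ?_)
  rintro _ ⟨m, rfl⟩
  exact eval_natCast m

noncomputable def stirling2DivDescPochhammer (n : ℕ) : ℚ[X] :=
  ∑ i ∈ range (n + 1), ((stirling2 n i : ℚ) / i) • descPochhammer ℚ i

theorem coeff_stirling2DivDescPochhammer (n k : ℕ) :
    (stirling2DivDescPochhammer n).coeff k =
      ∑ i ∈ Icc k n, (stirling2 n i : ℚ) * stirling1 i k / i := by
  simp only [stirling2DivDescPochhammer, finsetSum_coeff, coeff_smul, coeff_descPochhammer,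
    smul_eq_mul, div_mul_eq_mul_div]
  refine (sum_subset (fun i hi => ?_) fun i hi hi' => ?_).symm
  · rw [mem_Icc] at hi
    exact mem_range_succ_iff.2 hi.2
  · have hik : i < k := by
      rw [mem_Icc] at hi'
      rw [mem_range_succ_iff] at hi
      omega
    simp [stirling1_eq_zero_of_lt hik]

theorem stirling2DivDescPochhammer_comp_X_add_one_sub (m : ℕ) :
    (stirling2DivDescPochhammer (m + 1)).comp (X + 1) - stirling2DivDescPochhammer (m + 1) =
      (X + 1) ^ m := by
  have hterm (j : ℕ) : ((stirling2 (m + 1) (j + 1) : ℚ) / (j + 1 : ℕ)) •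
      ((descPochhammer ℚ (j + 1)).comp (X + 1) - descPochhammer ℚ (j + 1)) =
      stirling2 (m + 1) (j + 1) • descPochhammer ℚ j := by
    rw [descPochhammer_succ_comp_X_add_one_sub, ← Nat.cast_smul_eq_nsmul ℚ, smul_smul,
      ← Nat.cast_smul_eq_nsmul ℚ]
    congr 1
    field_simp
  simp only [stirling2DivDescPochhammer, Polynomial.sum_comp, smul_comp, ← sum_sub_distrib,
    ← smul_sub]
  rw [sum_range_succ', X_add_one_pow_eq_sum_stirling2_smul_descPochhammer, descPochhammer_zero,
    one_comp, sub_self, smul_zero, add_zero]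
  exact sum_congr rfl fun j _ => hterm j

theorem bernoulli_comp_X_add_one_sub (n : ℕ) :
    (Polynomial.bernoulli n).comp (X + 1) - Polynomial.bernoulli n = n • X ^ (n - 1) := by
  rw [add_comm, bernoulli_comp_one_add_X, add_sub_cancel_left]

theorem coeff_bernoulli_comp_X_add_one {n k : ℕ} (hkn : k ≤ n) :
    ((Polynomial.bernoulli n).comp (X + 1)).coeff k =
      bernoulli (n - k) * n.choose k + if k = n - 1 then (n : ℚ) else 0 := by
  rw [← sub_add_cancel ((Polynomial.bernoulli n).comp (X + 1)) (Polynomial.bernoulli n),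
    bernoulli_comp_X_add_one_sub, coeff_add, coeff_bernoulli, if_pos hkn, add_comm,
    nsmul_eq_mul, ← C_eq_natCast, coeff_C_mul_X_pow]

theorem stirling2DivDescPochhammer_succ (m : ℕ) :
    stirling2DivDescPochhammer (m + 1) =
      (m + 1 : ℚ)⁻¹ • ((Polynomial.bernoulli (m + 1)).comp (X + 1) - C (bernoulli' (m + 1))) := by
  apply eq_of_comp_X_add_one_sub_eq
  · rw [stirling2DivDescPochhammer_comp_X_add_one_sub]
    have hB := congr_arg (·.comp (X + 1)) (bernoulli_comp_X_add_one_sub (m + 1))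
    simp only [sub_comp, comp_assoc, smul_comp] at hB
    simp only [smul_comp, sub_comp, C_comp, comp_assoc, ← smul_sub, sub_sub_sub_cancel_right, hB]
    rw [Nat.add_sub_cancel, X_pow_comp, ← Nat.cast_smul_eq_nsmul ℚ, smul_smul, Nat.cast_succ,
      inv_mul_cancel₀ (by positivity), one_smul]
  · simp [stirling2DivDescPochhammer, eval_finsetSum, descPochhammer_eval_zero, bernoulli_eval_one]

end

theorem stmt7_general (n k : ℕ) (hk : 0 < k) (hkn : k ≤ n) :
    ∑ i ∈ Finset.Icc k n, (stirling2 n i : ℚ) * (stirling1 i k : ℚ) / i =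
      1 / n * (n.choose k : ℚ) * bernoulli (n - k) + (if n - 1 = k then 1 else 0) := by
  obtain ⟨m, rfl⟩ : ∃ m, n = m + 1 := ⟨n - 1, by omega⟩
  rw [← coeff_stirling2DivDescPochhammer, stirling2DivDescPochhammer_succ, Polynomial.coeff_smul,
    Polynomial.coeff_sub, Polynomial.coeff_C, if_neg hk.ne', sub_zero,
    coeff_bernoulli_comp_X_add_one hkn, smul_eq_mul, mul_add, Nat.add_sub_cancel]
  simp only [eq_comm (a := k), Nat.cast_add_one]
  rw [mul_ite, inv_mul_cancel₀ (by positivity), mul_zero]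
  ring

theorem stmt7 (n k : ℕ) (hn : 0 < n) (hk : 0 < k) (hkn : k ≤ n) :
    ∑ i ∈ Finset.Icc k n, (stirling2 n i : ℚ) * (stirling1 i k : ℚ) / i =
      1 / n * (n.choose k : ℚ) * bernoulli (n - k) + (if n - 1 = k then 1 else 0) :=
  stmt7_general n k hk hkn
end

section
/- For every positive integer r and every nonnegative integer n, sum_{k=0}^{n} (-1)^k * (k!/(k+r)) * S(n, k) = (1/(r-1)!) * sum_{k=0}^{r-1} |s(r, k+1)| * B_{n+k}. -/
/-!
Normalised by `(r-1)!`, both sides satisfy `f (r+1) n = f r (n+1) + r * f r n`: on the left this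
follows from `S(n+1,k+1) = S(n,k) + (k+1) S(n,k+1)` and the partial fractions
`k/(k+r) - (k+1)/(k+r+1) = r/(k+r+1) - r/(k+r)`, on the right from the recurrence
`|s(r+1,k+1)| = r |s(r,k+1)| + |s(r,k)|`. It remains to treat `r = 1`, i.e.
`B_n = ∑ (-1)^k k!/(k+1) S(n,k)`. Since `x^n = ∑ S(n,k) (x)_k`, the polynomial
`∑ S(n,k)/(k+1) (x)_{k+1}` has forward difference `x^n`, as does `B_{n+1}(x)/(n+1)`; so the two
differ by a constant, and their coefficients of `x` agree. The coefficient of `x` in `(x)_{k+1}`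
is `(-1)^k k!`.
-/

open Finset

theorem sum_range_succ_eq_of_eq_zero {M : Type*} [AddCommMonoid M] {f : ℕ → M} {n : ℕ}
    (h0 : f 0 = 0) (hn : f (n + 1) = 0) :
    ∑ k ∈ range (n + 1), f (k + 1) = ∑ k ∈ range (n + 1), f k := by
  have h := (sum_range_succ' f (n + 1)).symm.trans (sum_range_succ f (n + 1))
  rwa [h0, hn, add_zero, add_zero] at h

theorem stirling2_eq_stirlingSecond : ∀ n k : ℕ, stirling2 n k = Nat.stirlingSecond n k
  | 0, 0 | 0, _ + 1 | _ + 1, 0 => rfl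
  | n + 1, k + 1 => by
    rw [stirling2, Nat.stirlingSecond_succ_succ, stirling2_eq_stirlingSecond n k,
      stirling2_eq_stirlingSecond n (k + 1), add_comm]

theorem stirling1_eq_neg_one_pow_mul_stirlingFirst :
    ∀ n k : ℕ, stirling1 n k = (-1) ^ (n + k) * Nat.stirlingFirst n k
  | 0, 0 | 0 + 1, 0 => rfl
  | 0, _ + 1 => by simp [stirling1]
  | n + 1 + 1, 0 => by
    rw [stirling1, stirling1_eq_neg_one_pow_mul_stirlingFirst (n + 1) 0]
    simp
  | n + 1, k + 1 => by
    rw [stirling1, Nat.stirlingFirst_succ_succ, stirling1_eq_neg_one_pow_mul_stirlingFirst n k,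
      stirling1_eq_neg_one_pow_mul_stirlingFirst n (k + 1)]
    push_cast
    ring

theorem abs_stirling1_eq_stirlingFirst (n k : ℕ) :
    |(stirling1 n k : ℚ)| = Nat.stirlingFirst n k := by
  rw [stirling1_eq_neg_one_pow_mul_stirlingFirst]
  push_cast
  rw [abs_mul, abs_pow, abs_neg, abs_one, one_pow, one_mul, Nat.abs_cast]

namespace Polynomial

variable {R : Type*} [CommRing R]

theorem descPochhammer_eval_add_one_sub (k : ℕ) (x : R) :
    (descPochhammer R (k + 1)).eval (x + 1) - (descPochhammer R (k + 1)).eval x =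
      (k + 1) * (descPochhammer R k).eval x := by
  have hleft :
      (descPochhammer R (k + 1)).eval (x + 1) = (x + 1) * (descPochhammer R k).eval x := by
    simp [descPochhammer_succ_left]
  rw [hleft, descPochhammer_succ_eval]
  ring

theorem coeff_descPochhammer_succ_one (k : ℕ) :
    (descPochhammer R (k + 1)).coeff 1 = (-1) ^ k * k.factorial := by
  induction k with
  | zero => simp
  | succ k ih =>
    rw [descPochhammer_succ_right, mul_sub, coeff_sub, coeff_mul_X, coeff_mul_natCast, ih,
      coeff_zero_eq_eval_zero, descPochhammer_ne_zero_eval_zero R k.succ_ne_zero]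
    push_cast [Nat.factorial_succ]
    ring

theorem pow_eq_sum_stirlingSecond_mul_descPochhammer_eval (x : R) (n : ℕ) :
    x ^ n = ∑ k ∈ range (n + 1), (Nat.stirlingSecond n k : R) * (descPochhammer R k).eval x := by
  induction n with
  | zero => simp
  | succ n ih =>
    set f : ℕ → R := fun k => k * Nat.stirlingSecond n k * (descPochhammer R k).eval x with hf
    have hshift : ∑ k ∈ range (n + 1), f k = ∑ k ∈ range (n + 1), f (k + 1) :=
      (sum_range_succ_eq_of_eq_zero (by simp [hf])
        (by simp [hf, Nat.stirlingSecond_eq_zero_of_lt n.lt_succ_self])).symm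
    calc x ^ (n + 1)
        = ∑ k ∈ range (n + 1), x * (Nat.stirlingSecond n k * (descPochhammer R k).eval x) := by
          rw [pow_succ', ih, mul_sum]
      _ = ∑ k ∈ range (n + 1), Nat.stirlingSecond n k * (descPochhammer R (k + 1)).eval x +
            ∑ k ∈ range (n + 1), f k := by
          rw [← sum_add_distrib]
          refine sum_congr rfl fun k _ => ?_
          rw [hf, descPochhammer_succ_eval]
          ring
      _ = ∑ k ∈ range (n + 1),
            Nat.stirlingSecond (n + 1) (k + 1) * (descPochhammer R (k + 1)).eval x := by
          rw [hshift, ← sum_add_distrib]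
          refine sum_congr rfl fun k _ => ?_
          rw [hf, Nat.stirlingSecond_succ_succ]
          push_cast
          ring
      _ = _ := by simp [sum_range_succ' _ (n + 1)]

theorem eq_C_eval_zero_of_eval_add_one [IsDomain R] [CharZero R] {p : R[X]}
    (hp : ∀ x, p.eval (x + 1) = p.eval x) : p = C (p.eval 0) := by
  have hnat (m : ℕ) : p.eval (m : R) = p.eval 0 := by
    induction m with
    | zero => simp
    | succ m ih => rw [Nat.cast_succ, hp, ih]
  refine eq_of_infinite_eval_eq _ _ (Set.infinite_of_injective_forall_mem Nat.cast_injective ?_)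
  simp [hnat]

end Polynomial

open Polynomial in
theorem C_mul_sum_stirlingSecond_mul_descPochhammer (n : ℕ) :
    C ((n : ℚ) + 1) * ∑ k ∈ range (n + 1),
        C ((Nat.stirlingSecond n k : ℚ) / (k + 1)) * descPochhammer ℚ (k + 1) =
      Polynomial.bernoulli (n + 1) - C (_root_.bernoulli (n + 1)) := by
  set Q := ∑ k ∈ range (n + 1),
    C ((Nat.stirlingSecond n k : ℚ) / (k + 1)) * descPochhammer ℚ (k + 1)
  have hQ (x : ℚ) : Q.eval (x + 1) - Q.eval x = x ^ n := by
    simp only [Q, eval_finsetSum, eval_mul, eval_C, ← sum_sub_distrib, ← mul_sub,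
      descPochhammer_eval_add_one_sub, pow_eq_sum_stirlingSecond_mul_descPochhammer_eval x n]
    refine sum_congr rfl fun k _ => ?_
    field_simp
  have hQ0 : Q.eval 0 = 0 := by simp [Q, eval_finsetSum]
  set P := C ((n : ℚ) + 1) * Q - Polynomial.bernoulli (n + 1)
  have hP : P = C (P.eval 0) := by
    refine eq_C_eval_zero_of_eval_add_one fun x => ?_
    have hB := bernoulli_eval_one_add (n + 1) x
    rw [add_comm 1 x, Nat.add_sub_cancel] at hB
    simp only [P, eval_sub, eval_mul, eval_C, hB]
    push_cast
    linear_combination ((n : ℚ) + 1) * hQ x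
  have hP0 : P.eval 0 = -_root_.bernoulli (n + 1) := by simp [P, hQ0, bernoulli_eval_zero]
  rw [hP0, C_neg] at hP
  linear_combination hP

theorem bernoulli_eq_sum_stirlingSecond (n : ℕ) :
    bernoulli n =
      ∑ k ∈ range (n + 1), (-1 : ℚ) ^ k * k.factorial / (k + 1) * Nat.stirlingSecond n k := by
  have h := congrArg (fun p : Polynomial ℚ => p.coeff 1)
    (C_mul_sum_stirlingSecond_mul_descPochhammer n)
  simp only [Polynomial.coeff_C_mul, Polynomial.finsetSum_coeff,
    Polynomial.coeff_descPochhammer_succ_one, Polynomial.coeff_sub, Polynomial.coeff_bernoulli,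
    Polynomial.coeff_C, Nat.choose_one_right] at h
  simp only [le_add_iff_nonneg_left, zero_le, if_true, one_ne_zero, if_false, sub_zero,
    Nat.add_sub_cancel, Nat.cast_add_one] at h
  have hn : (n : ℚ) + 1 ≠ 0 := n.cast_add_one_ne_zero
  refine mul_left_cancel₀ hn ?_
  rw [mul_comm _ (bernoulli n), ← h]
  congr 1
  refine sum_congr rfl fun k _ => ?_
  ring

def alternatingStirlingSum (r n : ℕ) : ℚ :=
  ∑ k ∈ range (n + 1), (-1 : ℚ) ^ k * k.factorial / (k + r) * Nat.stirlingSecond n k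

def stirlingFirstBernoulliSum (r n : ℕ) : ℚ :=
  ∑ k ∈ range r, (Nat.stirlingFirst r (k + 1) : ℚ) * bernoulli (n + k)

theorem alternatingStirlingSum_one (n : ℕ) : alternatingStirlingSum 1 n = bernoulli n := by
  rw [alternatingStirlingSum, bernoulli_eq_sum_stirlingSecond, Nat.cast_one]

theorem alternatingStirlingSum_succ_right {r : ℕ} (hr : r ≠ 0) (n : ℕ) :
    alternatingStirlingSum r (n + 1) =
      r * (alternatingStirlingSum (r + 1) n - alternatingStirlingSum r n) := by
  set c : ℕ → ℚ := fun k => (-1 : ℚ) ^ k * k.factorial / (k + r)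
  set g : ℕ → ℚ := fun k => c k * (k * Nat.stirlingSecond n k)
  have hg : ∑ k ∈ range (n + 1), g (k + 1) = ∑ k ∈ range (n + 1), g k :=
    sum_range_succ_eq_of_eq_zero (by simp [g])
      (by simp [g, Nat.stirlingSecond_eq_zero_of_lt n.lt_succ_self])
  calc alternatingStirlingSum r (n + 1)
      = ∑ k ∈ range (n + 1), (c (k + 1) * Nat.stirlingSecond n k + g (k + 1)) := by
        rw [alternatingStirlingSum, sum_range_succ', Nat.stirlingSecond_succ_zero]
        simp only [Nat.stirlingSecond_succ_succ, c, g]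
        push_cast
        simp only [mul_zero, add_zero]
        refine sum_congr rfl fun k _ => ?_
        ring
    _ = ∑ k ∈ range (n + 1), (c (k + 1) * Nat.stirlingSecond n k + g k) := by
        rw [sum_add_distrib, sum_add_distrib, hg]
    _ = _ := by
        rw [alternatingStirlingSum, alternatingStirlingSum, ← sum_sub_distrib, mul_sum]
        refine sum_congr rfl fun k _ => ?_
        have hkr : (k : ℚ) + r ≠ 0 := by positivity
        have hkr' : (k : ℚ) + r + 1 ≠ 0 := by positivity
        simp only [c, g, Nat.factorial_succ]
        push_cast
        field_simp
        ring

theorem stirlingFirstBernoulliSum_succ_left {r : ℕ} (hr : r ≠ 0) (n : ℕ) :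
    stirlingFirstBernoulliSum (r + 1) n =
      stirlingFirstBernoulliSum r (n + 1) + r * stirlingFirstBernoulliSum r n := by
  have hcycles :
      ∑ k ∈ range (r + 1), (r * Nat.stirlingFirst r (k + 1) : ℚ) * bernoulli (n + k) =
        r * stirlingFirstBernoulliSum r n := by
    rw [sum_range_succ, Nat.stirlingFirst_eq_zero_of_lt r.lt_succ_self, stirlingFirstBernoulliSum,
      mul_sum]
    simp only [Nat.cast_zero, mul_zero, zero_mul, add_zero, mul_assoc]
  have hfixed : ∑ k ∈ range (r + 1), (Nat.stirlingFirst r k : ℚ) * bernoulli (n + k) =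
      stirlingFirstBernoulliSum r (n + 1) := by
    obtain ⟨s, rfl⟩ := Nat.exists_eq_add_one_of_ne_zero hr
    rw [sum_range_succ', Nat.stirlingFirst_succ_zero, stirlingFirstBernoulliSum]
    simp only [Nat.cast_zero, zero_mul, add_zero, Nat.add_right_comm n 1, Nat.add_assoc]
  rw [← hcycles, ← hfixed, ← sum_add_distrib, stirlingFirstBernoulliSum]
  refine sum_congr rfl fun k _ => ?_
  rw [Nat.stirlingFirst_succ_succ]
  push_cast
  ring

theorem factorial_mul_alternatingStirlingSum (r n : ℕ) :
    r.factorial * alternatingStirlingSum (r + 1) n = stirlingFirstBernoulliSum (r + 1) n := by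
  induction r generalizing n with
  | zero => simp [alternatingStirlingSum_one, stirlingFirstBernoulliSum, Nat.stirlingFirst_self]
  | succ r ih =>
    rw [stirlingFirstBernoulliSum_succ_left r.succ_ne_zero, ← ih, ← ih,
      alternatingStirlingSum_succ_right r.succ_ne_zero, Nat.factorial_succ]
    push_cast
    ring

theorem stmt11 (r : ℕ) (hr : 0 < r) (n : ℕ) :
    ∑ k ∈ Finset.range (n + 1), (-1 : ℚ) ^ k * (k.factorial : ℚ) / (k + r) * stirling2 n k =
      1 / ((r - 1).factorial : ℚ) *
        ∑ k ∈ Finset.range r, |(stirling1 r (k + 1) : ℚ)| * bernoulli (n + k) := by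
  obtain ⟨r, rfl⟩ := Nat.exists_eq_add_one_of_ne_zero hr.ne'
  simp only [stirling2_eq_stirlingSecond, abs_stirling1_eq_stirlingFirst, Nat.add_sub_cancel]
  change alternatingStirlingSum (r + 1) n = 1 / r.factorial * stirlingFirstBernoulliSum (r + 1) n
  rw [← factorial_mul_alternatingStirlingSum, ← mul_assoc, one_div,
    inv_mul_cancel₀ (Nat.cast_ne_zero.2 r.factorial_ne_zero), one_mul]
end

section
/- For every positive integer r and every nonnegative integer n, sum_{k=0}^{n} s(n, k)/(k+r) = sum_{k=0}^{r-1} lambda_{r,n,k} * B_{n+k}^*, where lambda_{r,n,k} = sum_{l=0}^{r-1-k} binom(r-1, l) * S(r-1-l, k) * n^l. -/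
open Finset

lemma stirling1_eq_zero : ∀ n k : ℕ, n < k → stirling1 n k = 0
  | 0, _ + 1, _ => rfl
  | n + 1, k + 1, h => by
    rw [stirling1, stirling1_eq_zero n k (by omega), stirling1_eq_zero n (k+1) (by omega)]
    ring

lemma stirling2_eq_zero : ∀ n k : ℕ, n < k → stirling2 n k = 0
  | 0, _ + 1, _ => rfl
  | n + 1, k + 1, h => by
    rw [stirling2, stirling2_eq_zero n k (by omega), stirling2_eq_zero n (k+1) (by omega)]
    ring

lemma descPoch_eq_sum (n : ℕ) (x : ℝ) :
    (descPochhammer ℝ n).eval x = ∑ k ∈ range (n + 1), (stirling1 n k : ℝ) * x ^ k := by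
  induction n with
  | zero => simp [stirling1]
  | succ n ih =>
    rw [descPochhammer_succ_eval, ih, Finset.sum_range_succ' _ (n + 1)]
    simp only [stirling1, pow_succ, pow_zero, mul_one]
    push_cast
    have hz : (stirling1 n (n+1) : ℝ) = 0 := by
      rw [stirling1_eq_zero n (n+1) (lt_add_one n)]; norm_num
    have hB : ∑ k ∈ range (n+1), ((stirling1 n k:ℝ) - n * stirling1 n (k+1)) * (x^k * x)
        = (∑ k ∈ range (n+1), (stirling1 n k:ℝ) * x^(k+1))
          - (n:ℝ) * ∑ k ∈ range (n+1), (stirling1 n (k+1):ℝ) * x^(k+1) := by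
      rw [Finset.mul_sum, ← Finset.sum_sub_distrib]
      exact sum_congr rfl fun k _ => by ring
    have hAx : (∑ k ∈ range (n+1), (stirling1 n k:ℝ) * x^k) * x
        = ∑ k ∈ range (n+1), (stirling1 n k:ℝ) * x^(k+1) := by
      rw [Finset.sum_mul]; exact sum_congr rfl fun k _ => by ring
    have hshift : ∑ k ∈ range (n+1), (stirling1 n (k+1):ℝ) * x^(k+1)
        = (∑ k ∈ range (n+1), (stirling1 n k:ℝ) * x^k) - (stirling1 n 0 : ℝ) := by
      have h2 := Finset.sum_range_succ' (fun k => (stirling1 n k : ℝ) * x ^ k) (n+1)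
      rw [Finset.sum_range_succ (fun k => (stirling1 n k : ℝ) * x ^ k) (n+1)] at h2
      simp only [hz, zero_mul, add_zero, pow_zero, mul_one] at h2
      simp only [pow_succ] at h2 ⊢
      linarith [h2]
    simp only [pow_succ] at hB hAx hshift
    rw [hB, hshift, mul_sub, ← hAx]
    ring

lemma pow_eq_sum_stirling2 (m : ℕ) (y : ℝ) :
    y ^ m = ∑ k ∈ range (m + 1), (stirling2 m k : ℝ) * (descPochhammer ℝ k).eval y := by
  induction m with
  | zero => simp [stirling2]
  | succ m ih =>
    have hmul : ∀ k : ℕ, y * (descPochhammer ℝ k).eval y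
        = (descPochhammer ℝ (k+1)).eval y + (k:ℝ) * (descPochhammer ℝ k).eval y := by
      intro k; rw [descPochhammer_succ_eval]; ring
    have hz : (stirling2 m (m+1) : ℝ) = 0 := by
      rw [stirling2_eq_zero m (m+1) (lt_add_one m)]; norm_num
    calc y ^ (m+1) = y * y ^ m := by ring
      _ = ∑ k ∈ range (m+1), (stirling2 m k : ℝ) *
            ((descPochhammer ℝ (k+1)).eval y + (k:ℝ) * (descPochhammer ℝ k).eval y) := by
          rw [ih, Finset.mul_sum]
          exact sum_congr rfl fun k _ => by rw [← hmul k]; ring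
      _ = (∑ k ∈ range (m+1), (stirling2 m k : ℝ) * (descPochhammer ℝ (k+1)).eval y)
          + ∑ k ∈ range (m+1), (k:ℝ) * (stirling2 m k : ℝ) * (descPochhammer ℝ k).eval y := by
          rw [← Finset.sum_add_distrib]
          exact sum_congr rfl fun k _ => by ring
      _ = (∑ k ∈ range (m+1), (stirling2 m k : ℝ) * (descPochhammer ℝ (k+1)).eval y)
          + ∑ k ∈ range (m+1), ((k:ℝ)+1) * (stirling2 m (k+1) : ℝ) * (descPochhammer ℝ (k+1)).eval y := by
          congr 1
          rw [Finset.sum_range_succ' (fun k => (k:ℝ) * (stirling2 m k : ℝ) * (descPochhammer ℝ k).eval y) m,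
            Finset.sum_range_succ (fun k => ((k:ℝ)+1) * (stirling2 m (k+1) : ℝ) * (descPochhammer ℝ (k+1)).eval y) m]
          simp [hz]
      _ = ∑ k ∈ range (m+2), (stirling2 (m+1) k : ℝ) * (descPochhammer ℝ k).eval y := by
          rw [Finset.sum_range_succ' (fun k => (stirling2 (m+1) k : ℝ) * (descPochhammer ℝ k).eval y) (m+1),
            ← Finset.sum_add_distrib]
          simp only [stirling2, Nat.cast_zero, zero_mul, add_zero]
          exact sum_congr rfl fun k _ => by push_cast; ring

lemma key_identity (m n : ℕ) (x : ℝ) :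
    x ^ m * (descPochhammer ℝ n).eval x =
      ∑ k ∈ range (m+1),
        (∑ l ∈ range (m+1-k), (m.choose l : ℝ) * (stirling2 (m-l) k : ℝ) * (n:ℝ)^l) *
          (descPochhammer ℝ (n+k)).eval x := by
  have hQ : ∀ k : ℕ, (descPochhammer ℝ n).eval x * (descPochhammer ℝ k).eval (x - n)
      = (descPochhammer ℝ (n+k)).eval x := by
    intro k
    have := congrArg (Polynomial.eval x) (descPochhammer_mul (R := ℝ) n k)
    simpa [Polynomial.eval_mul, Polynomial.eval_comp] using this
  have hx : x ^ m = ∑ k ∈ range (m+1),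
      (∑ l ∈ range (m+1-k), (m.choose l:ℝ) * (stirling2 (m-l) k:ℝ) * (n:ℝ)^l) *
        (descPochhammer ℝ k).eval (x-n) := by
    have h1 : x ^ m = ((n:ℝ) + (x - n))^m := by ring_nf
    rw [h1, add_pow]
    have h2 : ∀ l ∈ range (m+1), (n:ℝ)^l * (x-n)^(m-l) * (m.choose l:ℝ)
        = ∑ k ∈ range (m+1),
            (m.choose l:ℝ) * (stirling2 (m-l) k:ℝ) * (n:ℝ)^l * (descPochhammer ℝ k).eval (x-n) := by
      intro l hl
      rw [pow_eq_sum_stirling2 (m-l) (x-n)]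
      rw [show (n:ℝ)^l * (∑ k ∈ range (m-l+1), (stirling2 (m-l) k:ℝ) * (descPochhammer ℝ k).eval (x-n)) * (m.choose l:ℝ)
          = ∑ k ∈ range (m-l+1), (m.choose l:ℝ) * (stirling2 (m-l) k:ℝ) * (n:ℝ)^l * (descPochhammer ℝ k).eval (x-n) by
        rw [Finset.mul_sum, Finset.sum_mul]
        exact sum_congr rfl fun k _ => by ring]
      refine Finset.sum_subset (Finset.range_subset_range.mpr (by omega)) fun k _ hk => ?_
      rw [stirling2_eq_zero (m-l) k (by simp at hk ⊢; omega)]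
      norm_num
    rw [Finset.sum_congr rfl h2, Finset.sum_comm]
    refine sum_congr rfl fun k hk => ?_
    rw [Finset.sum_mul]
    refine (Finset.sum_subset (Finset.range_subset_range.mpr (Nat.sub_le _ _)) fun l hl hlk => ?_).symm
    simp only [Finset.mem_range] at hk hl hlk
    rw [stirling2_eq_zero (m-l) k (by omega)]
    norm_num
  calc x ^ m * (descPochhammer ℝ n).eval x
      = ∑ k ∈ range (m+1),
          (∑ l ∈ range (m+1-k), (m.choose l:ℝ) * (stirling2 (m-l) k:ℝ) * (n:ℝ)^l) *
            ((descPochhammer ℝ n).eval x * (descPochhammer ℝ k).eval (x-n)) := by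
        rw [hx, Finset.sum_mul]
        exact sum_congr rfl fun k _ => by ring
    _ = _ := sum_congr rfl fun k _ => by rw [hQ k]

theorem stmt14 (r : ℕ) (hr : 0 < r) (n : ℕ) :
    ∑ k ∈ Finset.range (n + 1), (stirling1 n k : ℝ) / (k + r) =
      ∑ k ∈ Finset.range r,
        (∑ l ∈ Finset.range (r - k), ((r - 1).choose l : ℝ) * (stirling2 (r - 1 - l) k : ℝ) * (n : ℝ) ^ l) *
          bernoulliStar (n + k) := by
  obtain ⟨m, rfl⟩ : ∃ m, r = m + 1 := ⟨r - 1, by omega⟩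
  simp only [Nat.add_sub_cancel]
  push_cast
  calc ∑ k ∈ range (n + 1), (stirling1 n k : ℝ) / (k + ((m:ℝ)+1))
      = ∑ k ∈ range (n + 1), ∫ x in (0:ℝ)..1, (stirling1 n k : ℝ) * x ^ (k + m) := by
        refine sum_congr rfl fun k _ => ?_
        rw [intervalIntegral.integral_const_mul, integral_pow]
        push_cast
        rw [one_pow, zero_pow (by positivity)]
        ring
    _ = ∫ x in (0:ℝ)..1, ∑ k ∈ range (n + 1), (stirling1 n k : ℝ) * x ^ (k + m) := by
        rw [intervalIntegral.integral_finset_sum]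
        exact fun k _ => (Continuous.intervalIntegrable (by continuity) _ _)
    _ = ∫ x in (0:ℝ)..1, x ^ m * (descPochhammer ℝ n).eval x := by
        refine intervalIntegral.integral_congr fun x _ => ?_
        rw [descPoch_eq_sum, Finset.mul_sum]
        exact sum_congr rfl fun k _ => by rw [pow_add]; ring
    _ = ∫ x in (0:ℝ)..1, ∑ k ∈ range (m+1),
          (∑ l ∈ range (m+1-k), (m.choose l : ℝ) * (stirling2 (m-l) k : ℝ) * (n:ℝ)^l) *
            (descPochhammer ℝ (n+k)).eval x := by
        exact intervalIntegral.integral_congr fun x _ => key_identity m n x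
    _ = ∑ k ∈ range (m+1),
          (∑ l ∈ range (m+1-k), (m.choose l : ℝ) * (stirling2 (m-l) k : ℝ) * (n:ℝ)^l) *
            bernoulliStar (n+k) := by
        rw [intervalIntegral.integral_finset_sum]
        · exact sum_congr rfl fun k _ => by
            rw [intervalIntegral.integral_const_mul]; rfl
        · exact fun k _ => (Continuous.intervalIntegrable (continuous_const.mul ((descPochhammer ℝ (n+k)).continuous)) _ _)
end
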